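/- Let a ∈ ℝ, let φ : (a,∞) → ℝ be C¹ with φ'(t) > 0 for all t, and suppose Λ_λ := ∫_{λ}^{∞} dμ / √(e^{2(φ(μ) − φ(λ))} − 1) is finite for every λ ∈ (a,∞). If φ' is monotone non-decreasing on (a,∞), then λ ↦ Λ_λ is monotone non-increasing: λ₁ ≤ λ₂ implies Λ_{λ₁} ≥ Λ_{λ₂}. If φ' is monotone non-increasing, then λ ↦ Λ_λ is monotone non-decreasing. -/

import Mathlib

open Set Filter MeasureTheory
open scoped ENNReal

/-- The half-length `Λ_{u₀} = ∫_{u₀}^∞ dλ / √(e^{2(φ(λ)-φ(u₀))} - 1) ∈ (0,∞]`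
of the maximal interval of existence of the grim reaper through `u₀`. -/
noncomputable def Lam (φ : ℝ → ℝ) (u₀ : ℝ) : ℝ≥0∞ :=
  ∫⁻ t in Set.Ioi u₀, ENNReal.ofReal (1 / Real.sqrt (Real.exp (2 * (φ t - φ u₀)) - 1))

/-!
Substituting `v = φ t - φ λ` turns `Λ_λ` into
`∫_0^∞ (1 / φ'(t_λ(v))) dv / √(e^{2v} - 1)`, where `t_λ(v) = φ⁻¹(φ λ + v)` is the point at which
`φ` has risen by `v` above `φ λ`. Since `φ` is increasing, `t_λ(v)` increases with `λ`, so the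
weight `1 / φ'(t_λ(v))` decreases in `λ` when `φ'` is non-decreasing and increases when `φ'` is
non-increasing. The substitution needs `φ` to be unbounded above; if it is bounded, the integrand
of every `Λ_λ` is bounded below by a positive constant on an infinite ray, so `Λ ≡ ∞`.
-/

open Real

lemma strictMonoOn_Ioi_of_hasDerivAt_pos {a : ℝ} {φ φ' : ℝ → ℝ}
    (hφ : ∀ t ∈ Ioi a, HasDerivAt φ (φ' t) t) (hφ' : ∀ t ∈ Ioi a, 0 < φ' t) :
    StrictMonoOn φ (Ioi a) :=
  strictMonoOn_of_hasDerivWithinAt_pos (convex_Ioi a)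
    (fun t ht => (hφ t ht).continuousAt.continuousWithinAt)
    (fun t ht => (hφ t (interior_subset ht)).hasDerivWithinAt)
    (fun t ht => hφ' t (interior_subset ht))

lemma tendsto_atTop_atTop_of_monotoneOn_Ioi {α β : Type*} [LinearOrder α] [Nonempty α]
    [LinearOrder β] {f : α → β} {a : α} (hf : MonotoneOn f (Ioi a))
    (hb : ¬BddAbove (f '' Ioi a)) : Tendsto f atTop atTop := by
  refine tendsto_atTop_atTop.2 fun M => ?_
  obtain ⟨_, ⟨T, hT, rfl⟩, hMT⟩ := not_bddAbove_iff.1 hb M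
  exact ⟨T, fun t hTt => hMT.le.trans (hf hT (hT.trans_le hTt) hTt)⟩

lemma image_Ioi_eq_Ioi_of_not_bddAbove {a l : ℝ} {φ : ℝ → ℝ} (hcont : ContinuousOn φ (Ioi a))
    (hmono : StrictMonoOn φ (Ioi a)) (hb : ¬BddAbove (φ '' Ioi a)) (hl : l ∈ Ioi a) :
    φ '' Ioi l = Ioi (φ l) :=
  (hcont.mono (Ici_subset_Ioi.2 hl)).image_Ioi_of_strictMonoOn (hmono.mono (Ici_subset_Ioi.2 hl))
    (tendsto_atTop_atTop_of_monotoneOn_Ioi hmono.monotoneOn hb)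

lemma one_div_sqrt_exp_sub_one_le_of_le {x y : ℝ} (hx : 0 < x) (hxy : x ≤ y) :
    1 / √(exp y - 1) ≤ 1 / √(exp x - 1) :=
  one_div_le_one_div_of_le (sqrt_pos.2 (sub_pos.2 (one_lt_exp_iff.2 hx)))
    (sqrt_le_sqrt (by gcongr))

lemma Lam_eq_top_of_bddAbove {φ : ℝ → ℝ} {l : ℝ} (hφ : StrictMonoOn φ (Ici l))
    (hb : BddAbove (φ '' Ioi l)) : Lam φ l = ⊤ := by
  obtain ⟨M, hM⟩ := hb
  have hlM : φ l < M := (hφ self_mem_Ici (by simp : l + 1 ∈ Ici l) (lt_add_one l)).trans_le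
    (hM (mem_image_of_mem φ (lt_add_one l)))
  have hc : 0 < 1 / √(exp (2 * (M - φ l)) - 1) := by
    have : 1 < exp (2 * (M - φ l)) := one_lt_exp_iff.2 (by linarith)
    positivity
  refine top_le_iff.1 ?_
  calc ⊤ = ∫⁻ _ in Ioi l, ENNReal.ofReal (1 / √(exp (2 * (M - φ l)) - 1)) := by
        rw [setLIntegral_const, Real.volume_Ioi, ENNReal.mul_top (ENNReal.ofReal_pos.2 hc).ne']
    _ ≤ Lam φ l := setLIntegral_mono' measurableSet_Ioi fun t ht =>
        ENNReal.ofReal_le_ofReal <| one_div_sqrt_exp_sub_one_le_of_le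
          (by linarith [hφ self_mem_Ici (mem_Ici_of_Ioi ht) ht])
          (by linarith [hM (mem_image_of_mem φ ht)])

lemma Lam_eq_lintegral_inv_deriv {φ φ' ψ : ℝ → ℝ} {l : ℝ}
    (hφ : ∀ t ∈ Ioi l, HasDerivAt φ (φ' t) t) (hφ' : ∀ t ∈ Ioi l, 0 < φ' t)
    (himg : φ '' Ioi l = Ioi (φ l)) (hψ : LeftInvOn ψ φ (Ioi l)) :
    Lam φ l = ∫⁻ v in Ioi 0,
      ENNReal.ofReal (1 / φ' (ψ (v + φ l))) * ENNReal.ofReal (1 / √(exp (2 * v) - 1)) := by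
  have hderiv : ∀ t ∈ Ioi l, HasDerivAt (fun t => φ t - φ l) (φ' t) t :=
    fun t ht => (hφ t ht).sub_const _
  have hshift : (fun t => φ t - φ l) '' Ioi l = Ioi 0 := by
    rw [← image_image (· - φ l) φ, himg, image_sub_const_Ioi, sub_self]
  rw [← hshift, lintegral_image_eq_lintegral_abs_deriv_mul measurableSet_Ioi
    (fun t ht => (hderiv t ht).hasDerivWithinAt)
    (strictMonoOn_Ioi_of_hasDerivAt_pos hderiv hφ').injOn]
  refine setLIntegral_congr_fun measurableSet_Ioi fun t ht => ?_
  rw [sub_add_cancel, hψ ht, abs_of_pos (hφ' t ht), ← mul_assoc,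
    ← ENNReal.ofReal_mul (hφ' t ht).le, mul_one_div_cancel (hφ' t ht).ne', ENNReal.ofReal_one,
    one_mul]

lemma mapsTo_and_monotoneOn_invFunOn_add {a v : ℝ} {φ : ℝ → ℝ}
    (hmono : StrictMonoOn φ (Ioi a)) (himg : ∀ l ∈ Ioi a, φ '' Ioi l = Ioi (φ l)) (hv : 0 < v) :
    MapsTo (fun l => Function.invFunOn φ (Ioi a) (v + φ l)) (Ioi a) (Ioi a) ∧
      MonotoneOn (fun l => Function.invFunOn φ (Ioi a) (v + φ l)) (Ioi a) := by
  have hlevel : MapsTo (fun l => v + φ l) (Ioi a) (φ '' Ioi a) := fun l hl =>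
    image_mono (Ioi_subset_Ioi hl.le) (himg l hl ▸ lt_add_of_pos_left (φ l) hv)
  have hinv : MonotoneOn (Function.invFunOn φ (Ioi a)) (φ '' Ioi a) :=
    Function.monotoneOn_of_rightInvOn_of_mapsTo hmono.monotoneOn
      (surjOn_image φ _).rightInvOn_invFunOn (surjOn_image φ _).mapsTo_invFunOn
  exact ⟨(surjOn_image φ _).mapsTo_invFunOn.comp hlevel,
    hinv.comp (fun _ hl _ hm h => add_le_add_right (hmono.monotoneOn hl hm h) v) hlevel⟩

theorem stmt_3 (a : ℝ) (φ φ' : ℝ → ℝ)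
    (hφ : ∀ t ∈ Ioi a, HasDerivAt φ (φ' t) t)
    (hφ'pos : ∀ t ∈ Ioi a, 0 < φ' t) :
    (MonotoneOn φ' (Ioi a) → AntitoneOn (Lam φ) (Ioi a)) ∧
    (AntitoneOn φ' (Ioi a) → MonotoneOn (Lam φ) (Ioi a)) := by
  have hmono := strictMonoOn_Ioi_of_hasDerivAt_pos hφ hφ'pos
  by_cases hbdd : BddAbove (φ '' Ioi a)
  · have hLam : EqOn (fun _ => ⊤) (Lam φ) (Ioi a) := fun l hl => (Lam_eq_top_of_bddAbove
      (hmono.mono (Ici_subset_Ioi.2 hl)) (hbdd.mono (image_mono (Ioi_subset_Ioi hl.le)))).symm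
    exact ⟨fun _ => antitoneOn_const.congr hLam, fun _ => monotoneOn_const.congr hLam⟩
  have himg : ∀ l ∈ Ioi a, φ '' Ioi l = Ioi (φ l) := fun l hl => image_Ioi_eq_Ioi_of_not_bddAbove
    (fun t ht => (hφ t ht).continuousAt.continuousWithinAt) hmono hbdd hl
  set σ : ℝ → ℝ → ℝ := fun l v => Function.invFunOn φ (Ioi a) (v + φ l)
  have hσ (v : ℝ) (hv : v ∈ Ioi 0) := mapsTo_and_monotoneOn_invFunOn_add hmono himg hv
  have hcompare : ∀ l₁ ∈ Ioi a, ∀ l₂ ∈ Ioi a,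
      (∀ v ∈ Ioi 0, φ' (σ l₁ v) ≤ φ' (σ l₂ v)) → Lam φ l₂ ≤ Lam φ l₁ := by
    intro l₁ hl₁ l₂ hl₂ hle
    have hrep (l : ℝ) (hl : l ∈ Ioi a) := Lam_eq_lintegral_inv_deriv
      (fun t ht => hφ t (Ioi_subset_Ioi hl.le ht)) (fun t ht => hφ'pos t (Ioi_subset_Ioi hl.le ht))
      (himg l hl) (hmono.injOn.leftInvOn_invFunOn.mono (Ioi_subset_Ioi hl.le))
    rw [hrep l₁ hl₁, hrep l₂ hl₂]
    refine setLIntegral_mono' measurableSet_Ioi fun v hv => ?_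
    gcongr
    exacts [hφ'pos _ ((hσ v hv).1 hl₁), hle v hv]
  exact ⟨fun h l₁ hl₁ l₂ hl₂ hl => hcompare l₁ hl₁ l₂ hl₂ fun v hv =>
      h ((hσ v hv).1 hl₁) ((hσ v hv).1 hl₂) ((hσ v hv).2 hl₁ hl₂ hl),
    fun h l₁ hl₁ l₂ hl₂ hl => hcompare l₂ hl₂ l₁ hl₁ fun v hv =>
      h ((hσ v hv).1 hl₁) ((hσ v hv).1 hl₂) ((hσ v hv).2 hl₁ hl₂ hl)⟩
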